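/- Let a=(a_1,...,a_n) be a weakly increasing real sequence and let e=(e_1,...,e_n) be an arbitrary real sequence. Then the matrix M_{e→a} is totally non-negative if and only if e is a restricted growth sequence relative to a (in the cap sense for weakly increasing a). -/

import Mathlib

open Polynomial Finset

/-- A real square matrix is totally non-negative if every minor (determinant of a
square submatrix selected by strictly increasing row indices and strictly increasing
column indices) is non-negative. -/
def TNN {N : ℕ} (A : Matrix (Fin N) (Fin N) ℝ) : Prop :=
  ∀ (r : ℕ) (ρ γ : Fin r → Fin N), StrictMono ρ → StrictMono γ →
    0 ≤ (A.submatrix ρ γ).det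

/-- `IsCOB n a e M` says that `M` is the change-of-basis matrix `M_{e→a}`:
for each `0 ≤ m ≤ n`, the entry `M m k` is the coefficient of `∏_{i=1}^k (x - a_i)`
in the expansion of `∏_{i=1}^m (x - e_i)` in the basis
`1, (x-a₁), …, ∏_{i=1}^n (x-a_i)`.  (Sequences are 0-indexed: `a i` is `a_{i+1}`.)
Since that basis expansion is unique, this characterizes `M_{e→a}` uniquely. -/
def IsCOB (n : ℕ) (a e : ℕ → ℝ) (M : Matrix (Fin (n+1)) (Fin (n+1)) ℝ) : Prop :=
  ∀ m : Fin (n+1),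
    (∏ i ∈ Finset.range (m : ℕ), (X - C (e i))) =
      ∑ k : Fin (n+1), C (M m k) * ∏ i ∈ Finset.range (k : ℕ), (X - C (a i))

/-- The cap-index function for the restricted-growth condition (0-indexed version of
`f` with `f(1) = 1`): `capF a e i` is `f(i+1) - 1`, so the cap for `e i` is
`a (capF a e i)`.  The index increments exactly when `e_i` equals its cap. -/
noncomputable def capF (a e : ℕ → ℝ) : ℕ → ℕ
  | 0 => 0
  | i + 1 => if e i = a (capF a e i) then capF a e i + 1 else capF a e i

/-- `e` is a restricted growth sequence relative to (weakly increasing) `a`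
(cap sense): each `e_i` is at most its cap `a_{f(i)}`. -/
def IsRGCap (n : ℕ) (a e : ℕ → ℝ) : Prop :=
  ∀ i, i < n → e i ≤ a (capF a e i)

/-! Multiplying a polynomial by `X - c` acts on its coordinates `v` in the Newton basis
`∏_{i<k} (X - a i)` by `v ↦ (v (k-1) + (a k - c) v k)_k`, which gives a recursion for the rows
of `M = M_{e→a}`.

Necessity: write `f = capF a e`. As long as `e` satisfies the restricted-growth condition up
to `m`, row `m` of `M` vanishes left of column `f m` and is positive there, so `M (m+1) (f m)` is
`a (f m) - e m` times a positive number; non-negativity of the entries forces `e m ≤ a (f m)`.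

Sufficiency, by induction on `n`: if `e 0 = a 0` then `M_{e→a} = 1 ⊕ M_{e'→a'}` for the
shifted sequences; otherwise `e 0 < a 0` and `M_{e→a}` arises from `1 ⊕ M_{e'→a}` by adding
`a k - e 0 ≥ 0` times column `k + 1` to column `k`, for `k = 0, 1, …` in turn. Such a column
operation changes a minor by a non-negative multiple of another minor (or of a determinant with
a repeated column), so it preserves total non-negativity. -/

lemma TNN.entry_nonneg {N : ℕ} {A : Matrix (Fin N) (Fin N) ℝ} (hA : TNN A) (i j : Fin N) :
    0 ≤ A i j := by
  simpa using hA 1 (fun _ => i) (fun _ => j) (Subsingleton.strictMono _) (Subsingleton.strictMono _)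

lemma tnn_fin_zero (A : Matrix (Fin 0) (Fin 0) ℝ) : TNN A := by
  rintro (_ | r) ρ γ - -
  · simp
  · exact (ρ 0).elim0

lemma StrictMono.exists_eq_succ_comp {r N : ℕ} {ρ : Fin r → Fin (N + 1)} (hρ : StrictMono ρ)
    (h : ∀ p, ρ p ≠ 0) : ∃ ρ' : Fin r → Fin N, StrictMono ρ' ∧ ρ = Fin.succ ∘ ρ' :=
  ⟨fun p => (ρ p).pred (h p), fun _ _ hxy => Fin.pred_lt_pred_iff.mpr (hρ hxy),
    funext fun _ => (Fin.succ_pred _ _).symm⟩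

lemma StrictMono.apply_ne_zero {r N : ℕ} {ρ : Fin (r + 1) → Fin (N + 1)}
    (hρ : StrictMono ρ) (h : ρ 0 ≠ 0) (p : Fin (r + 1)) : ρ p ≠ 0 :=
  Fin.pos_iff_ne_zero.mp ((Fin.pos_iff_ne_zero.mpr h).trans_le (hρ.monotone (Fin.zero_le p)))

lemma StrictMono.apply_succ_ne_zero {r N : ℕ} {ρ : Fin (r + 1) → Fin (N + 1)}
    (hρ : StrictMono ρ) (p : Fin r) : ρ p.succ ≠ 0 :=
  Fin.pos_iff_ne_zero.mp ((Fin.zero_le _).trans_lt (hρ (Fin.succ_pos p)))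

/-- The matrix `1 ⊕ A`, with the new row and column first. -/
def oneBlockDiag {N : ℕ} (A : Matrix (Fin N) (Fin N) ℝ) : Matrix (Fin (N + 1)) (Fin (N + 1)) ℝ :=
  Matrix.of (Fin.cons (Fin.cons 1 0) fun i => Fin.cons 0 (A i))

@[simp] lemma oneBlockDiag_zero_zero {N : ℕ} (A : Matrix (Fin N) (Fin N) ℝ) :
    oneBlockDiag A 0 0 = 1 := rfl
@[simp] lemma oneBlockDiag_zero_succ {N : ℕ} (A : Matrix (Fin N) (Fin N) ℝ) (j : Fin N) :
    oneBlockDiag A 0 j.succ = 0 := rfl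
@[simp] lemma oneBlockDiag_succ_zero {N : ℕ} (A : Matrix (Fin N) (Fin N) ℝ) (i : Fin N) :
    oneBlockDiag A i.succ 0 = 0 := rfl
@[simp] lemma oneBlockDiag_succ_succ {N : ℕ} (A : Matrix (Fin N) (Fin N) ℝ) (i j : Fin N) :
    oneBlockDiag A i.succ j.succ = A i j := rfl

lemma TNN.oneBlockDiag {N : ℕ} {A : Matrix (Fin N) (Fin N) ℝ} (hA : TNN A) :
    TNN (_root_.oneBlockDiag A) := by
  have avoiding : ∀ r (ρ γ : Fin r → Fin (N + 1)), StrictMono ρ → StrictMono γ →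
      (∀ p, ρ p ≠ 0) → (∀ q, γ q ≠ 0) → 0 ≤ ((_root_.oneBlockDiag A).submatrix ρ γ).det := by
    intro r ρ γ hρ hγ hρ0 hγ0
    obtain ⟨ρ', hρ', rfl⟩ := hρ.exists_eq_succ_comp hρ0
    obtain ⟨γ', hγ', rfl⟩ := hγ.exists_eq_succ_comp hγ0
    exact hA r ρ' γ' hρ' hγ'
  rintro (_ | r) ρ γ hρ hγ
  · simp
  by_cases hρ0 : ρ 0 = 0 <;> by_cases hγ0 : γ 0 = 0
  · have hrow : ∀ q : Fin r, (_root_.oneBlockDiag A) 0 (γ q.succ) = 0 := fun q => by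
      obtain ⟨j, hj⟩ := Fin.exists_succ_eq.mpr (hγ.apply_succ_ne_zero q)
      rw [← hj, oneBlockDiag_zero_succ]
    rw [Matrix.det_succ_row_zero, Fin.sum_univ_succ]
    simp only [Matrix.submatrix_apply, hρ0, hγ0, oneBlockDiag_zero_zero, hrow]
    simpa [Matrix.submatrix_submatrix] using avoiding r _ _ (hρ.comp Fin.strictMono_succ)
      (hγ.comp Fin.strictMono_succ) hρ.apply_succ_ne_zero hγ.apply_succ_ne_zero
  · refine (Matrix.det_eq_zero_of_row_eq_zero 0 fun q => ?_).ge
    obtain ⟨j, hj⟩ := Fin.exists_succ_eq.mpr (hγ.apply_ne_zero hγ0 q)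
    simp [hρ0, ← hj]
  · refine (Matrix.det_eq_zero_of_column_eq_zero 0 fun p => ?_).ge
    obtain ⟨i, hi⟩ := Fin.exists_succ_eq.mpr (hρ.apply_ne_zero hρ0 p)
    simp [hγ0, ← hi]
  · exact avoiding _ ρ γ hρ hγ (hρ.apply_ne_zero hρ0) (hγ.apply_ne_zero hγ0)

lemma StrictMono.update_of_succ_eq {r N : ℕ} {γ : Fin r → Fin N} (hγ : StrictMono γ) {q₀ : Fin r}
    {p : Fin N} (hp : (γ q₀ : ℕ) + 1 = p) (hp' : ∀ y, γ y ≠ p) :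
    StrictMono (Function.update γ q₀ p) := by
  intro x y hxy
  have hne : ∀ y, (γ y : ℕ) ≠ p := fun y h => hp' y (Fin.ext h)
  simp only [Function.update_apply]
  split_ifs with hx hy hy
  · exact absurd (hx ▸ hy ▸ hxy) (lt_irrefl _)
  · have := Fin.lt_def.mp (hγ (hx ▸ hxy)); have := hne y; rw [Fin.lt_def]; omega
  · have := Fin.lt_def.mp (hγ (hy ▸ hxy)); rw [Fin.lt_def]; omega
  · exact hγ hxy

lemma TNN.updateCol_add_mul_succ {N : ℕ} {A : Matrix (Fin N) (Fin N) ℝ} (hA : TNN A)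
    {q p : Fin N} (hqp : (q : ℕ) + 1 = p) {c : ℝ} (hc : 0 ≤ c) :
    TNN (A.updateCol q fun i => A i q + c * A i p) := by
  intro r ρ γ hρ hγ
  by_cases hq : ∃ q₀, γ q₀ = q
  swap
  · push Not at hq
    have hsub : (A.updateCol q fun i => A i q + c * A i p).submatrix ρ γ = A.submatrix ρ γ := by
      ext x y; simp [hq y]
    exact hsub ▸ hA r ρ γ hρ hγ
  obtain ⟨q₀, rfl⟩ := hq
  -- the minor is linear in column `q₀`; the new summand is `c` times the minor with `γ q₀`
  -- replaced by its successor `p`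
  have hsub : (A.updateCol (γ q₀) fun i => A i (γ q₀) + c * A i p).submatrix ρ γ =
      (A.submatrix ρ γ).updateCol q₀
        ((fun x => A.submatrix ρ γ x q₀) + c • fun x => A (ρ x) p) := by
    ext x y; simp [Matrix.updateCol_apply, hγ.injective.eq_iff]
  rw [hsub, Matrix.det_updateCol_add, Matrix.updateCol_eq_self, Matrix.det_updateCol_smul]
  refine add_nonneg (hA r ρ γ hρ hγ) (mul_nonneg hc ?_)
  by_cases hp : ∃ q₁, γ q₁ = p
  · obtain ⟨q₁, hq₁⟩ := hp
    have hne : q₀ ≠ q₁ := by rintro rfl; rw [hq₁] at hqp; omega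
    refine (Matrix.det_zero_of_column_eq hne fun x => ?_).ge
    simp [hne.symm, hq₁]
  · push Not at hp
    have hupd : (A.submatrix ρ γ).updateCol q₀ (fun x => A (ρ x) p) =
        A.submatrix ρ (Function.update γ q₀ p) := by
      ext x y; by_cases hy : y = q₀ <;> simp [hy]
    rw [hupd]
    exact hA r ρ _ hρ (hγ.update_of_succ_eq hqp hp)

def truncMat (N : ℕ) (F : ℕ → ℕ → ℝ) : Matrix (Fin N) (Fin N) ℝ :=
  Matrix.of fun i j => F i j

def natOneBlockDiag (F : ℕ → ℕ → ℝ) : ℕ → ℕ → ℝ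
  | 0, 0 => 1
  | 0, _ + 1 => 0
  | _ + 1, 0 => 0
  | i + 1, j + 1 => F i j

lemma truncMat_natOneBlockDiag (N : ℕ) (F : ℕ → ℕ → ℝ) :
    truncMat (N + 1) (natOneBlockDiag F) = oneBlockDiag (truncMat N F) := by
  ext i j
  induction i using Fin.cases <;> induction j using Fin.cases <;> rfl

lemma TNN.truncMat_natOneBlockDiag {N : ℕ} {F : ℕ → ℕ → ℝ} (hF : TNN (truncMat N F)) :
    TNN (truncMat (N + 1) (natOneBlockDiag F)) :=
  _root_.truncMat_natOneBlockDiag N F ▸ hF.oneBlockDiag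

lemma TNN.truncMat_add_mul_succ {N : ℕ} {F : ℕ → ℕ → ℝ} (hF : TNN (truncMat (N + 1) F))
    {β : ℕ → ℝ} (hβ : ∀ j < N, 0 ≤ β j) (hlast : ∀ i ≤ N, F i (N + 1) = 0) :
    TNN (truncMat (N + 1) fun i j => F i j + β j * F i (j + 1)) := by
  -- perform the column operations from left to right, so column `j + 1` is still untouched
  -- when it is added to column `j`
  have hcols : ∀ t ≤ N,
      TNN (truncMat (N + 1) fun i j => F i j + if j < t then β j * F i (j + 1) else 0) := by
    intro t
    induction t with
    | zero => simpa using hF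
    | succ t ih =>
      intro ht
      convert (ih (by omega)).updateCol_add_mul_succ (q := ⟨t, by omega⟩) (p := ⟨t + 1, by omega⟩)
        rfl (hβ t (by omega)) using 1
      ext i j
      simp only [truncMat, Matrix.of_apply, Matrix.updateCol_apply, Fin.ext_iff]
      by_cases hj : (j : ℕ) = t
      · simp [hj]
      · simp [hj, show (j : ℕ) < t + 1 ↔ (j : ℕ) < t by omega]
  convert hcols N le_rfl using 1
  ext i j
  simp only [truncMat, Matrix.of_apply]
  split_ifs with hj
  · rfl
  · rw [show (j : ℕ) = N by omega, hlast i (by omega), mul_zero]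

/-- If `v` lists the coordinates of a polynomial `p` in the Newton basis `∏_{i<k} (X - a i)`, then
`mulXSub a c v` lists those of `(X - c) * p`, because
`(X - c) ∏_{i<k} (X - a i) = ∏_{i<k+1} (X - a i) + (a k - c) ∏_{i<k} (X - a i)`. -/
def mulXSub (a : ℕ → ℝ) (c : ℝ) (v : ℕ → ℝ) : ℕ → ℝ
  | 0 => (a 0 - c) * v 0
  | k + 1 => v k + (a (k + 1) - c) * v (k + 1)

lemma mulXSub_comm (a : ℕ → ℝ) (c d : ℝ) (v : ℕ → ℝ) :
    mulXSub a c (mulXSub a d v) = mulXSub a d (mulXSub a c v) := by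
  funext k
  rcases k with _ | _ | k <;> simp only [mulXSub] <;> ring

/-- `cob a e m k` is the entry `(m, k)` of `M_{e→a}` (see `IsCOB.eq_truncMat_cob`). -/
def cob (a e : ℕ → ℝ) : ℕ → ℕ → ℝ
  | 0 => fun k => if k = 0 then 1 else 0
  | m + 1 => mulXSub a (e m) (cob a e m)

lemma cob_eq_zero_of_lt (a e : ℕ → ℝ) {m k : ℕ} (h : m < k) : cob a e m k = 0 := by
  induction m generalizing k with
  | zero => simp [cob, h.ne']
  | succ m ih =>
    obtain ⟨k, rfl⟩ := Nat.exists_eq_add_of_lt (Nat.zero_lt_of_lt h)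
    simp only [cob, zero_add, mulXSub, ih (by omega : m < k), ih (by omega : m < k + 1), mul_zero,
      add_zero]

noncomputable def newtonSeq (a : ℕ → ℝ) : Polynomial.Sequence ℝ where
  elems' k := ∏ i ∈ range k, (X - C (a i))
  degree_eq' k := by simp [degree_prod]

lemma newtonSeq_apply (a : ℕ → ℝ) (k : ℕ) : newtonSeq a k = ∏ i ∈ range k, (X - C (a i)) := rfl

lemma X_sub_C_mul_newtonSeq (a : ℕ → ℝ) (c : ℝ) (k : ℕ) :
    (X - C c) * newtonSeq a k = newtonSeq a (k + 1) + C (a k - c) * newtonSeq a k := by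
  simp only [newtonSeq_apply, prod_range_succ, C_sub]
  ring

lemma X_sub_C_mul_sum_newtonSeq (a : ℕ → ℝ) (c : ℝ) {v : ℕ → ℝ} {L : ℕ} (hv : v L = 0) :
    (X - C c) * ∑ k ∈ range (L + 1), C (v k) * newtonSeq a k =
      ∑ k ∈ range (L + 1), C (mulXSub a c v k) * newtonSeq a k := by
  have hterm : ∀ k, (X - C c) * (C (v k) * newtonSeq a k) =
      C (v k) * newtonSeq a (k + 1) + C ((a k - c) * v k) * newtonSeq a k := fun k => by
    rw [mul_left_comm, X_sub_C_mul_newtonSeq, C_mul]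
    ring
  rw [mul_sum, sum_congr rfl fun k _ => hterm k, sum_add_distrib, sum_range_succ, hv,
    sum_range_succ' _ L, sum_range_succ' (fun k => C (mulXSub a c v k) * newtonSeq a k)]
  simp only [mulXSub, C_add, add_mul, sum_add_distrib, map_zero, zero_mul, add_zero]
  ring

lemma prod_X_sub_C_eq_sum_cob (a e : ℕ → ℝ) {n m : ℕ} (hm : m ≤ n) :
    ∏ i ∈ range m, (X - C (e i)) = ∑ k ∈ range (n + 1), C (cob a e m k) * newtonSeq a k := by
  induction m with
  | zero => simp [cob, newtonSeq_apply]
  | succ m ih =>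
    rw [prod_range_succ, mul_comm, ih (by omega),
      X_sub_C_mul_sum_newtonSeq a _ (cob_eq_zero_of_lt a e (by omega))]
    rfl

lemma IsCOB.eq_truncMat_cob {n : ℕ} {a e : ℕ → ℝ} {M : Matrix (Fin (n + 1)) (Fin (n + 1)) ℝ}
    (hM : IsCOB n a e M) : M = truncMat (n + 1) (cob a e) := by
  ext m k
  have hli := (newtonSeq a).linearIndependent.comp _ (Fin.val_injective (n := n + 1))
  refine sub_eq_zero.mp (Fintype.linearIndependent_iff.mp hli (fun k => M m k - cob a e m k) ?_ k)
  have hexp : ∑ k : Fin (n + 1), C (M m k) * newtonSeq a k =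
      ∑ k : Fin (n + 1), C (cob a e m k) * newtonSeq a k := by
    rw [Fin.sum_univ_eq_sum_range (fun k => C (cob a e m k) * newtonSeq a k),
      ← prod_X_sub_C_eq_sum_cob a e m.is_le]
    exact (hM m).symm
  simpa only [Function.comp_apply, sub_smul, sum_sub_distrib, smul_eq_C_mul, sub_eq_zero]

lemma cob_succ_zero (a e : ℕ → ℝ) (m : ℕ) : cob a e (m + 1) 0 = (a 0 - e m) * cob a e m 0 := rfl

lemma cob_succ_succ (a e : ℕ → ℝ) (m k : ℕ) :
    cob a e (m + 1) (k + 1) = cob a e m k + (a (k + 1) - e m) * cob a e m (k + 1) := rfl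

lemma cob_succ_eq_mulXSub (a e : ℕ → ℝ) (m : ℕ) :
    cob a e (m + 1) = mulXSub a (e 0) (cob a (fun i => e (i + 1)) m) := by
  induction m with
  | zero => rfl
  | succ m ih =>
    change mulXSub a (e (m + 1)) (cob a e (m + 1)) = _
    rw [ih, mulXSub_comm]
    rfl

lemma cob_succ_of_eq (a e : ℕ → ℝ) (h : e 0 = a 0) (m : ℕ) :
    cob a e (m + 1) 0 = 0 ∧
      ∀ k, cob a e (m + 1) (k + 1) = cob (fun i => a (i + 1)) (fun i => e (i + 1)) m k := by
  induction m with
  | zero =>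
    refine ⟨by simp [cob_succ_zero, h], fun k => ?_⟩
    rcases k with _ | k <;> simp [cob, mulXSub]
  | succ m ih =>
    obtain ⟨h0, hs⟩ := ih
    refine ⟨by rw [cob_succ_zero, h0, mul_zero], fun k => ?_⟩
    rcases k with _ | k
    · rw [cob_succ_succ, h0, hs 0, cob_succ_zero, zero_add]
    · rw [cob_succ_succ, hs k, hs (k + 1), cob_succ_succ]

lemma cob_eq_natOneBlockDiag_of_eq (a e : ℕ → ℝ) (h : e 0 = a 0) :
    cob a e = natOneBlockDiag (cob (fun i => a (i + 1)) (fun i => e (i + 1))) := by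
  funext m k
  rcases m with _ | m <;> rcases k with _ | k
  · rfl
  · rfl
  · exact (cob_succ_of_eq a e h m).1
  · exact (cob_succ_of_eq a e h m).2 k

lemma cob_eq_natOneBlockDiag_add_mul (a e : ℕ → ℝ) :
    cob a e = fun i k => natOneBlockDiag (cob a fun j => e (j + 1)) i k +
      (a k - e 0) * natOneBlockDiag (cob a fun j => e (j + 1)) i (k + 1) := by
  funext i k
  rcases i with _ | m
  · rcases k with _ | k <;> simp [cob, natOneBlockDiag]
  · rw [cob_succ_eq_mulXSub]
    rcases k with _ | k
    · simp [mulXSub, natOneBlockDiag]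
    · rfl

lemma capF_succ_of_eq {a e : ℕ → ℝ} {m : ℕ} (h : e m = a (capF a e m)) :
    capF a e (m + 1) = capF a e m + 1 := if_pos h

lemma capF_succ_of_ne {a e : ℕ → ℝ} {m : ℕ} (h : e m ≠ a (capF a e m)) :
    capF a e (m + 1) = capF a e m := if_neg h

lemma capF_le (a e : ℕ → ℝ) (m : ℕ) : capF a e m ≤ m := by
  induction m with
  | zero => rfl
  | succ m ih =>
    by_cases h : e m = a (capF a e m)
    · rw [capF_succ_of_eq h]; omega
    · rw [capF_succ_of_ne h]; omega

lemma capF_succ_shift_of_eq (a e : ℕ → ℝ) (h : e 0 = a 0) (i : ℕ) :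
    capF a e (i + 1) = capF (fun j => a (j + 1)) (fun j => e (j + 1)) i + 1 := by
  induction i with
  | zero => exact capF_succ_of_eq h
  | succ i ih =>
    by_cases hi : e (i + 1) = a (capF a e (i + 1))
    · rw [capF_succ_of_eq hi, ih, capF_succ_of_eq (ih ▸ hi)]
    · rw [capF_succ_of_ne hi, ih, capF_succ_of_ne (ih ▸ hi)]

lemma capF_succ_shift_of_ne (a e : ℕ → ℝ) (h : e 0 ≠ a 0) (i : ℕ) :
    capF a e (i + 1) = capF a (fun j => e (j + 1)) i := by
  induction i with
  | zero => exact capF_succ_of_ne h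
  | succ i ih =>
    by_cases hi : e (i + 1) = a (capF a e (i + 1))
    · rw [capF_succ_of_eq hi, ih, capF_succ_of_eq (ih ▸ hi)]
    · rw [capF_succ_of_ne hi, ih, capF_succ_of_ne (ih ▸ hi)]

lemma cob_eq_zero_of_lt_capF (a e : ℕ → ℝ) {m k : ℕ} (hk : k < capF a e m) : cob a e m k = 0 := by
  induction m generalizing k with
  | zero => exact absurd hk (Nat.not_lt_zero k)
  | succ m ih =>
    have hk' : k < capF a e m ∨ (k = capF a e m ∧ e m = a k) := by
      by_cases h : e m = a (capF a e m)
      · rw [capF_succ_of_eq h] at hk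
        rcases (Nat.lt_succ_iff.mp hk).lt_or_eq with hk | rfl
        exacts [Or.inl hk, Or.inr ⟨rfl, h⟩]
      · exact Or.inl (capF_succ_of_ne h ▸ hk)
    have hdiag : (a k - e m) * cob a e m k = 0 := by
      rcases hk' with hk | ⟨-, h⟩
      · rw [ih hk, mul_zero]
      · rw [h, sub_self, zero_mul]
    rcases k with _ | k
    · rwa [cob_succ_zero]
    · have hk : k < capF a e m := by rcases hk' with hk | ⟨hk, -⟩ <;> omega
      rw [cob_succ_succ, hdiag, ih hk, add_zero]

lemma cob_succ_capF (a e : ℕ → ℝ) (m : ℕ) :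
    cob a e (m + 1) (capF a e m) = (a (capF a e m) - e m) * cob a e m (capF a e m) := by
  rcases hc : capF a e m with _ | k
  · rfl
  · rw [cob_succ_succ, cob_eq_zero_of_lt_capF a e (by omega), zero_add]

lemma isRGCap_of_cob_nonneg {n : ℕ} {a e : ℕ → ℝ} (ha : ∀ i j, i ≤ j → j < n → a i ≤ a j)
    (hnn : ∀ m ≤ n, ∀ k ≤ n, 0 ≤ cob a e m k) : IsRGCap n a e := by
  suffices h : ∀ m ≤ n, (∀ i < m, e i ≤ a (capF a e i)) ∧ 0 < cob a e m (capF a e m) from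
    (h n le_rfl).1
  intro m
  induction m with
  | zero => exact fun _ => ⟨fun i hi => absurd hi (Nat.not_lt_zero i), by simp [capF, cob]⟩
  | succ m ih =>
    intro hm
    obtain ⟨hrg, hpos⟩ := ih (by omega)
    have hcap := capF_le a e m
    have hle : e m ≤ a (capF a e m) := by
      have := hnn (m + 1) hm (capF a e m) (by omega)
      rw [cob_succ_capF] at this
      linarith [nonneg_of_mul_nonneg_left this hpos]
    refine ⟨fun i hi => ?_, ?_⟩
    · rcases (Nat.lt_succ_iff.mp hi).lt_or_eq with hi | rfl
      exacts [hrg i hi, hle]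
    by_cases h : e m = a (capF a e m)
    · rw [capF_succ_of_eq h, cob_succ_succ]
      have hnext : 0 ≤ (a (capF a e m + 1) - e m) * cob a e m (capF a e m + 1) := by
        rcases Nat.lt_or_ge m (capF a e m + 1) with hlt | hge
        · rw [cob_eq_zero_of_lt a e hlt, mul_zero]
        · refine mul_nonneg ?_ (hnn m (by omega) _ (by omega))
          linarith [ha (capF a e m) (capF a e m + 1) (by omega) (by omega)]
      linarith
    · rw [capF_succ_of_ne h, cob_succ_capF]
      exact mul_pos (sub_pos.mpr (lt_of_le_of_ne hle h)) hpos

lemma tnn_truncMat_cob (n : ℕ) (a e : ℕ → ℝ) (ha : ∀ i j, i ≤ j → j < n → a i ≤ a j)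
    (he : IsRGCap n a e) : TNN (truncMat (n + 1) (cob a e)) := by
  induction n generalizing a e with
  | zero =>
    have hone : truncMat 1 (cob a e) = truncMat (0 + 1) (natOneBlockDiag (cob a e)) := by
      ext i j
      rw [Fin.fin_one_eq_zero i, Fin.fin_one_eq_zero j]
      rfl
    exact hone ▸ (tnn_fin_zero _).truncMat_natOneBlockDiag
  | succ n ih =>
    by_cases h : e 0 = a 0
    · rw [cob_eq_natOneBlockDiag_of_eq a e h]
      refine (ih _ _ (fun i j hij hj => ha (i + 1) (j + 1) (by omega) (by omega))
        fun i hi => ?_).truncMat_natOneBlockDiag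
      simpa [capF_succ_shift_of_eq a e h] using he (i + 1) (by omega)
    · rw [cob_eq_natOneBlockDiag_add_mul]
      have he0 : e 0 ≤ a 0 := he 0 (by omega)
      refine TNN.truncMat_add_mul_succ ?_ (fun j hj => ?_) (fun i hi => ?_)
      · refine TNN.truncMat_natOneBlockDiag
          (ih a _ (fun i j hij hj => ha i j hij (by omega)) fun i hi => ?_)
        simpa [capF_succ_shift_of_ne a e h] using he (i + 1) (by omega)
      · linarith [ha 0 j (by omega) hj]
      · rcases i with _ | m
        · rfl
        · exact cob_eq_zero_of_lt a _ (by omega)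

theorem statement1 (n : ℕ) (a e : ℕ → ℝ)
    (ha : ∀ i j, i ≤ j → j < n → a i ≤ a j)
    (M : Matrix (Fin (n+1)) (Fin (n+1)) ℝ) (hM : IsCOB n a e M) :
    TNN M ↔ IsRGCap n a e := by
  rw [hM.eq_truncMat_cob]
  refine ⟨fun hT => isRGCap_of_cob_nonneg ha fun m hm k hk => ?_, tnn_truncMat_cob n a e ha⟩
  exact hT.entry_nonneg ⟨m, Nat.lt_succ_of_le hm⟩ ⟨k, Nat.lt_succ_of_le hk⟩
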